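/- Let d = (d₀, d₀, d₁) on {1,2,3} with 0 < d₁ < d₀, γ = d₁/d₀, and fix φ with 1 - γ < φ < 1. Define M = [[1-φ, φ, 0],[φ, 0, (1-φ)/γ],[0, 1-φ, 1-(1-φ)/γ]]. Then M is d-stochastic, but M cannot be written as any finite product of T^d-transforms. -/

import Mathlib

/-!
Call a matrix row-nested if the positive entries of one row sit among those of another row.
For `d j ≤ d i` and `γ = d j / d i`, row `j` of `T^d_λ(i,j)` is `λγ eᵢ + (1-λ) eⱼ` and row `i` is
`(1-λγ) eᵢ + λ eⱼ`, so a `T^d`-transform is row-nested unless it is the identity (`λ = 0`) or the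
swap of two coordinates of equal weight (`λ = 1`, `γ = 1`). Among nonnegative matrices,
row-nestedness survives right multiplication by anything and left multiplication by permutation
matrices, so every product of `T^d`-transforms is a permutation matrix or row-nested. But the rows
of `M` have the pairwise incomparable supports `{1,2}`, `{1,3}`, `{2,3}`, and `M` is not a
`0`/`1` matrix.
-/

open Matrix BigOperators

/-- The `d`-swap `P^d(i,j)`: the identity except on the pair `{i,j}`, where it has
entries `(i,i) = 1 - d j / d i`, `(i,j) = 1`, `(j,i) = d j / d i`, `(j,j) = 0`. -/
noncomputable def Pswap {n : ℕ} (d : Fin n → ℝ) (i j : Fin n) : Matrix (Fin n) (Fin n) ℝ :=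
  Matrix.of fun k l =>
    if k = i ∧ l = i then 1 - d j / d i
    else if k = i ∧ l = j then 1
    else if k = j ∧ l = i then d j / d i
    else if k = j ∧ l = j then 0
    else if k = l then 1 else 0

/-- The `T^d`-transform `T^d_λ(i,j) = (1-λ)·I + λ·P^d(i,j)`. -/
noncomputable def Td {n : ℕ} (d : Fin n → ℝ) (lam : ℝ) (i j : Fin n) :
    Matrix (Fin n) (Fin n) ℝ :=
  (1 - lam) • (1 : Matrix (Fin n) (Fin n) ℝ) + lam • Pswap d i j

namespace Matrix

variable {ι : Type*} [Fintype ι]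

theorem mul_apply_pos_iff {A B : Matrix ι ι ℝ} (hA : ∀ i j, 0 ≤ A i j) (hB : ∀ i j, 0 ≤ B i j)
    (i k : ι) : 0 < (A * B) i k ↔ ∃ j, 0 < A i j ∧ 0 < B j k := by
  rw [mul_apply, Finset.sum_pos_iff_of_nonneg fun j _ => mul_nonneg (hA i j) (hB j k)]
  simp only [Finset.mem_univ, true_and]
  refine exists_congr fun j => ⟨fun h => ?_, fun h => mul_pos h.1 h.2⟩
  exact ⟨pos_of_mul_pos_left h (hB j k), pos_of_mul_pos_right h (hA i j)⟩

def HasNestedRows (X : Matrix ι ι ℝ) : Prop :=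
  ∃ i j, i ≠ j ∧ ∀ k, 0 < X j k → 0 < X i k

theorem HasNestedRows.mul {A B : Matrix ι ι ℝ} (hA : ∀ i j, 0 ≤ A i j) (hB : ∀ i j, 0 ≤ B i j)
    (h : A.HasNestedRows) : (A * B).HasNestedRows := by
  obtain ⟨i, j, hij, hsub⟩ := h
  refine ⟨i, j, hij, fun k hk => ?_⟩
  obtain ⟨l, hjl, hlk⟩ := (mul_apply_pos_iff hA hB j k).1 hk
  exact (mul_apply_pos_iff hA hB i k).2 ⟨l, hsub l hjl, hlk⟩

variable [DecidableEq ι]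

theorem HasNestedRows.permMatrix_mul {B : Matrix ι ι ℝ} (σ : Equiv.Perm ι)
    (h : B.HasNestedRows) : (σ.permMatrix ℝ * B).HasNestedRows := by
  obtain ⟨i, j, hij, hsub⟩ := h
  rw [PEquiv.toMatrix_toPEquiv_mul]
  exact ⟨σ.symm i, σ.symm j, by simpa using hij, by simpa using hsub⟩

variable (ι) in
def permOrNestedRows : Submonoid (Matrix ι ι ℝ) where
  carrier := {X | (∀ i j, 0 ≤ X i j) ∧ (X.HasNestedRows ∨ ∃ σ : Equiv.Perm ι, X = σ.permMatrix ℝ)}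
  one_mem' := ⟨fun i j => by by_cases h : i = j <;> simp [one_apply, h], .inr ⟨1, by simp⟩⟩
  mul_mem' := by
    rintro A B ⟨hA, hA' | ⟨σ, rfl⟩⟩ ⟨hB, hB' | ⟨τ, rfl⟩⟩
    all_goals refine ⟨fun i j => Finset.sum_nonneg fun k _ => mul_nonneg (hA i k) (hB k j), ?_⟩
    · exact .inl (hA'.mul hA hB)
    · exact .inl (hA'.mul hA hB)
    · exact .inl (hB'.permMatrix_mul σ)
    · exact .inr ⟨τ * σ, by simp⟩

end Matrix

section Transforms

variable {n : ℕ} (d : Fin n → ℝ) (lam : ℝ) {i j : Fin n}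

theorem Td_apply (hij : i ≠ j) (k l : Fin n) :
    Td d lam i j k l =
      if k = i ∧ l = i then 1 - lam * (d j / d i)
      else if k = i ∧ l = j then lam
      else if k = j ∧ l = i then lam * (d j / d i)
      else if k = j ∧ l = j then 1 - lam
      else if k = l then 1 else 0 := by
  simp only [Td, Pswap, Matrix.add_apply, Matrix.smul_apply, Matrix.of_apply, smul_eq_mul]
  rw [Matrix.one_apply]
  split_ifs <;> grind

theorem Td_nonneg (hd : 0 ≤ d j / d i) (hd' : d j / d i ≤ 1) (hlam : lam ∈ Set.Icc (0 : ℝ) 1)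
    (hij : i ≠ j) (k l : Fin n) : 0 ≤ Td d lam i j k l := by
  obtain ⟨h0, h1⟩ := hlam
  rw [Td_apply d lam hij]
  split_ifs <;> nlinarith

theorem Td_hasNestedRows (hlam : 0 < lam) (hlt : lam * (d j / d i) < 1) (hij : i ≠ j) :
    (Td d lam i j).HasNestedRows := by
  refine ⟨i, j, hij, fun k hk => ?_⟩
  have hji := hij.symm
  rcases eq_or_ne k i with rfl | hki
  · simpa [Td_apply d lam hij, hij] using hlt
  rcases eq_or_ne k j with hkj | hkj
  · simpa [Td_apply d lam hij, hkj, hji] using hlam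
  simp [Td_apply d lam hij, hki, hkj, hji, Ne.symm hkj] at hk

theorem Td_one_eq_swap (hij : i ≠ j) (hd : d i = d j) (hd0 : d i ≠ 0) :
    Td d 1 i j = Matrix.swap ℝ i j := by
  have hγ : d j / d i = 1 := by rw [← hd]; exact div_self hd0
  ext k l
  simp only [Td_apply d 1 hij, hγ, Matrix.swap, Equiv.Perm.permMatrix, PEquiv.toMatrix_apply,
    Equiv.toPEquiv_apply, Option.mem_some_iff, Equiv.swap_apply_def]
  grind

end Transforms

theorem Td_mem_permOrNestedRows {n : ℕ} {d : Fin n → ℝ} {lam : ℝ} {i j : Fin n}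
    (hj : 0 ≤ d j) (hji : d j ≤ d i) (hi : 0 < d i) (hlam : lam ∈ Set.Icc (0 : ℝ) 1)
    (hij : i ≠ j) : Td d lam i j ∈ Matrix.permOrNestedRows (Fin n) := by
  have hγ0 : 0 ≤ d j / d i := div_nonneg hj hi.le
  have hγ1 : d j / d i ≤ 1 := (div_le_one hi).2 hji
  refine ⟨Td_nonneg d lam hγ0 hγ1 hlam hij, ?_⟩
  obtain ⟨hlam0, hlam1⟩ := hlam
  rcases hlam0.eq_or_lt with rfl | hpos
  · exact .inr ⟨1, by simp [Td]⟩
  rcases hji.eq_or_lt with heq | hlt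
  · rcases hlam1.eq_or_lt with rfl | hlam1
    · exact .inr ⟨_, Td_one_eq_swap d hij heq.symm hi.ne'⟩
    · refine .inl (Td_hasNestedRows d lam hpos ?_ hij)
      rwa [heq, div_self hi.ne', mul_one]
  · have hγlt : d j / d i < 1 := (div_lt_one hi).2 hlt
    exact .inl (Td_hasNestedRows d lam hpos (by nlinarith) hij)

theorem list_prod_Td_mem_permOrNestedRows {n : ℕ} {d : Fin n → ℝ} (hd : Antitone d)
    (hpos : ∀ i, 0 < d i) (L : List (ℝ × Fin n × Fin n))
    (hL : ∀ t ∈ L, t.2.1 < t.2.2 ∧ t.1 ∈ Set.Icc (0 : ℝ) 1) :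
    (L.map fun t => Td d t.1 t.2.1 t.2.2).prod ∈ Matrix.permOrNestedRows (Fin n) := by
  refine Submonoid.list_prod_mem _ fun X hX => ?_
  obtain ⟨t, ht, rfl⟩ := List.mem_map.1 hX
  obtain ⟨hlt, hlam⟩ := hL t ht
  exact Td_mem_permOrNestedRows (hpos _).le (hd hlt.le) (hpos _) hlam hlt.ne

theorem antichainSupport_not_mem_permOrNestedRows {a b : ℝ} (ha0 : 0 < a) (ha1 : a < 1)
    (hb0 : 0 < b) (hb1 : b < 1) :
    !![1 - a, a, 0; a, 0, b; 0, 1 - a, 1 - b] ∉ Matrix.permOrNestedRows (Fin 3) := by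
  rintro ⟨-, ⟨i, j, hij, hsub⟩ | ⟨σ, hσ⟩⟩
  · have h0 := hsub 0
    have h1 := hsub 1
    have h2 := hsub 2
    fin_cases i <;> fin_cases j <;> simp at hij h0 h1 h2 <;> linarith
  · have h00 : 1 - a = σ.toPEquiv.toMatrix 0 0 := congrFun (congrFun hσ 0) 0
    rw [PEquiv.toMatrix_apply] at h00
    split_ifs at h00 <;> linarith

theorem stmt14_general (d0 d1 : ℝ) (h1 : 0 < d1) (h10 : d1 < d0)
    (phi : ℝ) (hphi1 : 1 - d1 / d0 < phi) (hphi2 : phi < 1) :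
    let d : Fin 3 → ℝ := ![d0, d0, d1]
    let γ : ℝ := d1 / d0
    let M : Matrix (Fin 3) (Fin 3) ℝ :=
      !![1 - phi, phi, 0; phi, 0, (1 - phi) / γ; 0, 1 - phi, 1 - (1 - phi) / γ]
    ((∀ i j, 0 ≤ M i j) ∧ (∀ j, ∑ i, M i j = 1) ∧ M.mulVec d = d) ∧
    ¬ ∃ L : List (ℝ × Fin 3 × Fin 3),
        (∀ t ∈ L, t.2.1 < t.2.2 ∧ t.1 ∈ Set.Icc (0 : ℝ) 1) ∧
        M = (L.map fun t => Td d t.1 t.2.1 t.2.2).prod := by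
  intro d γ M
  have hd0 : 0 < d0 := h1.trans h10
  have hγ : 0 < γ := div_pos h1 hd0
  have hphi0 : 0 < phi := by linarith [(div_lt_one hd0).2 h10]
  have hq0 : 0 < (1 - phi) / γ := div_pos (by linarith) hγ
  have hq1 : (1 - phi) / γ < 1 := (div_lt_one hγ).2 (by linarith)
  refine ⟨⟨fun i j => ?_, fun j => ?_, ?_⟩, ?_⟩
  · fin_cases i <;> fin_cases j <;> simp [M] <;> linarith
  · fin_cases j <;> simp [M, Fin.sum_univ_three]
  · ext i
    fin_cases i <;> simp [M, d, γ, mulVec, dotProduct, Fin.sum_univ_three] <;> field_simp <;> ring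
  · rintro ⟨L, hL, hM⟩
    have hanti : Antitone d := fun i j hij => by
      fin_cases i <;> fin_cases j <;> simp [d] at hij ⊢ <;> linarith
    have hpos : ∀ i, 0 < d i := fun i => by fin_cases i <;> simp [d] <;> linarith
    have hmem := list_prod_Td_mem_permOrNestedRows hanti hpos L hL
    rw [← hM] at hmem
    exact antichainSupport_not_mem_permOrNestedRows hphi0 hphi2 hq0 hq1 hmem

/-- for `d = (d₀, d₀, d₁)` with `0 < d₁ < d₀`, `γ = d₁/d₀` and
`1 - γ < φ < 1`, the matrix
`M = [[1-φ, φ, 0], [φ, 0, (1-φ)/γ], [0, 1-φ, 1-(1-φ)/γ]]` is `d`-stochastic but is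
not a finite product of `T^d`-transforms. -/
theorem stmt14 (d0 d1 : ℝ) (h1 : 0 < d1) (h10 : d1 < d0) (hsum : 2 * d0 + d1 = 1)
    (phi : ℝ) (hphi1 : 1 - d1 / d0 < phi) (hphi2 : phi < 1) :
    let d : Fin 3 → ℝ := ![d0, d0, d1]
    let γ : ℝ := d1 / d0
    let M : Matrix (Fin 3) (Fin 3) ℝ :=
      !![1 - phi, phi, 0; phi, 0, (1 - phi) / γ; 0, 1 - phi, 1 - (1 - phi) / γ]
    ((∀ i j, 0 ≤ M i j) ∧ (∀ j, ∑ i, M i j = 1) ∧ M.mulVec d = d) ∧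
    ¬ ∃ L : List (ℝ × Fin 3 × Fin 3),
        (∀ t ∈ L, t.2.1 < t.2.2 ∧ t.1 ∈ Set.Icc (0 : ℝ) 1) ∧
        M = (L.map fun t => Td d t.1 t.2.1 t.2.2).prod :=
  stmt14_general d0 d1 h1 h10 phi hphi1 hphi2
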